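/- For all partial multivalued functions P, Q on Baire space, (P ∐ Q)* ≡ᶜ_W P* × Q* (the finite parallelization of a coproduct is continuously Weihrauch equivalent to the product of the finite parallelizations). -/
import Mathlib


namespace Weihrauch

/-- Baire space ℕ^ℕ. -/
abbrev Baire : Type := ℕ → ℕ

/-- The interleaving pairing homeomorphism ⟨p,q⟩. -/
def pair (p q : Baire) : Baire := fun n => if n % 2 = 0 then p (n / 2) else q (n / 2)

/-- First component of the interleaving pairing. -/
def left (z : Baire) : Baire := fun n => z (2 * n)

/-- Second component of the interleaving pairing. -/
def right (z : Baire) : Baire := fun n => z (2 * n + 1)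

/-- The sequence np = n,p(0),p(1),… . -/
def cons (n : ℕ) (p : Baire) : Baire := fun m => match m with
  | 0 => n
  | k + 1 => p k

/-- Drop the first entry of a sequence. -/
def tail (z : Baire) : Baire := fun n => z (n + 1)

/-- The constant zero sequence 0^ℕ. -/
def zero : Baire := fun _ => 0

/-- The constant one sequence 1^ℕ. -/
def one : Baire := fun _ => 1

/-- Partial multivalued functions on Baire space. -/
abbrev MV : Type := Baire → Set Baire

/-- The domain of a partial multivalued function. -/
def dom (P : MV) : Set Baire := {x | (P x).Nonempty}

/-- Continuous Weihrauch reducibility P ≤ᶜ_W Q. -/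
def CWle (P Q : MV) : Prop :=
  ∃ H K : Baire → Baire,
    ContinuousOn K (dom P) ∧
    (∀ x ∈ dom P, K x ∈ dom Q) ∧
    ContinuousOn H {z | ∃ x ∈ dom P, ∃ y ∈ Q (K x), z = pair x y} ∧
    (∀ x ∈ dom P, ∀ y ∈ Q (K x), H (pair x y) ∈ P x)

/-- Continuous Weihrauch equivalence P ≡ᶜ_W Q. -/
def CWequiv (P Q : MV) : Prop := CWle P Q ∧ CWle Q P

/-- The infimum operation (P ⊕ Q)(⟨p,q⟩) = 0P(p) ∪ 1Q(q) for p ∈ dom P, q ∈ dom Q. -/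
def oplus (P Q : MV) : MV := fun z =>
  {r | left z ∈ dom P ∧ right z ∈ dom Q ∧
       ((∃ s ∈ P (left z), r = cons 0 s) ∨ (∃ s ∈ Q (right z), r = cons 1 s))}

/-- The coproduct (P ∐ Q)(0p) = 0P(p), (P ∐ Q)(1p) = 1Q(p). -/
def coprod (P Q : MV) : MV := fun z =>
  {r | (z 0 = 0 ∧ ∃ s ∈ P (tail z), r = cons 0 s) ∨
       (z 0 = 1 ∧ ∃ s ∈ Q (tail z), r = cons 1 s)}

/-- The product (P × Q)(⟨p,q⟩) = {⟨r,s⟩ | r ∈ P(p), s ∈ Q(q)}. -/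
def prod (P Q : MV) : MV := fun z =>
  {r | ∃ s ∈ P (left z), ∃ t ∈ Q (right z), r = pair s t}

/-- A fixed finite tupling ⟨p₀,…,p_{n-1}⟩ of n sequences, by interleaving. -/
def ftup (n : ℕ) (f : ℕ → Baire) : Baire := fun m => f (m % n) (m / n)

/-- The i-th projection inverting `ftup n`: `fproj n i (ftup n f) = f i` for i < n. -/
def fproj (n i : ℕ) (z : Baire) : Baire := fun j => z (j * n + i)

/-- The finite parallelization P*, with P*(n⟨p₁,…,pₙ⟩) = {n⟨r₁,…,rₙ⟩ | rᵢ ∈ P(pᵢ)}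
for n ≥ 1 and P*(0p) = {0^ℕ}.  (Note every sequence is of the form `ftup n f`,
since `ftup n (fun i => fproj n i z) = z`.) -/
def fpar (P : MV) : MV := fun z =>
  {r | (z 0 = 0 ∧ r = zero) ∨
       (1 ≤ z 0 ∧ r 0 = z 0 ∧
        ∀ i < z 0, fproj (z 0) i (tail r) ∈ P (fproj (z 0) i (tail z)))}

/-- Countable tupling ⟨p₁,p₂,…⟩ via the pairing bijection ℕ×ℕ→ℕ
(the family is indexed by 0,1,2,…). -/
def ctup (f : ℕ → Baire) : Baire := fun m => f (Nat.unpair m).1 (Nat.unpair m).2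

/-- Projection inverting `ctup`: `cproj i (ctup f) = f i`. -/
def cproj (i : ℕ) (z : Baire) : Baire := fun j => z (Nat.pair i j)

/-- The 1-indexed component pᵢ of a countable tuple z = ⟨p₁,p₂,…⟩ (for i ≥ 1). -/
def comp (z : Baire) (i : ℕ) : Baire := cproj (i - 1) z

/-- LLPO_{n,1}: at most one pair (i,j) with pᵢ(j) ≠ 0 in the domain;
values are the i0^ℕ with 1 ≤ i ≤ n and pᵢ = 0^ℕ. -/
def LLPOn (n : ℕ) : MV := fun z =>
  {r | (∀ i j i' j', 1 ≤ i → 1 ≤ i' → comp z i j ≠ 0 → comp z i' j' ≠ 0 →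
          (i = i' ∧ j = j')) ∧
       ∃ i, 1 ≤ i ∧ i ≤ n ∧ comp z i = zero ∧ r = cons i zero}

/-- LLPO_{∞,m}: at most m pairs (i,j) with pᵢ(j) ≠ 0 in the domain;
values are the i0^ℕ with pᵢ = 0^ℕ. -/
def LLPOinf (m : ℕ) : MV := fun z =>
  {r | (∃ s : Finset (ℕ × ℕ), s.card ≤ m ∧ ∀ i j, 1 ≤ i → comp z i j ≠ 0 → (i, j) ∈ s) ∧
       ∃ i, 1 ≤ i ∧ comp z i = zero ∧ r = cons i zero}

/-- The sequence 0ⁿ10^ℕ. -/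
def zeros1 (n : ℕ) : Baire := fun m => if m = n then 1 else 0

/-- Σ_k^∞LLPO(⟨0^ℕ,p⟩) = LLPO_{∞,2}(p), Σ_k^∞LLPO(⟨0ⁿ10^ℕ,p⟩) = LLPO_{n,1}(p) for n ≥ k. -/
def SigmaLLPO (k : ℕ) : MV := fun z =>
  {r | (left z = zero ∧ r ∈ LLPOinf 2 (right z)) ∨
       (∃ n, k ≤ n ∧ left z = zeros1 n ∧ r ∈ LLPOn n (right z))}

/-- c_𝒜, with dom(c_𝒜) = {0^ℕ} and c_𝒜(0^ℕ) = 𝒜. -/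
def cA (A : Set Baire) : MV := fun z => {r | z = zero ∧ r ∈ A}

/-- d_𝒜, with dom(d_𝒜) = 𝒜 and d_𝒜(x) = {1^ℕ} for x ∈ 𝒜. -/
def dA (A : Set Baire) : MV := fun z => {r | z ∈ A ∧ r = one}

/-- Continuous Medvedev reducibility 𝒜 ≤ᶜ_M 𝒝. -/
def CMle (A B : Set Baire) : Prop :=
  ∃ H : Baire → Baire, ContinuousOn H B ∧ ∀ x ∈ B, H x ∈ A

/-- The Medvedev sum 𝒜 + 𝒝 = 0𝒜 ∪ 1𝒝. -/
def msum (A B : Set Baire) : Set Baire := (cons 0 '' A) ∪ (cons 1 '' B)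

/-- The Medvedev product 𝒜 × 𝒝 = {⟨p,q⟩ | p ∈ 𝒜, q ∈ 𝒝}. -/
def mprod (A B : Set Baire) : Set Baire := {z | ∃ p ∈ A, ∃ q ∈ B, z = pair p q}

end Weihrauch


section Toolkit
open Weihrauch

instance : TopologicalSpace (List ℕ) := ⊥
instance : DiscreteTopology (List ℕ) := ⟨rfl⟩

lemma cont_read {κ β : Type*} [TopologicalSpace κ] [DiscreteTopology κ] [TopologicalSpace β]
    (g : κ → Baire → β) (hg : ∀ c, Continuous (g c)) {k : Baire → κ} (hk : Continuous k) :
    Continuous fun z => g (k z) z := by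
  rw [continuous_iff_continuousAt]
  intro z
  have hev : ∀ᶠ w in nhds z, k w = k z :=
    hk.continuousAt ((isOpen_discrete {k z}).mem_nhds rfl)
  exact ((hg (k z)).continuousAt).congr (hev.mono fun w hw => by simp [hw])

lemma cont_op1 {κ β : Type*} [TopologicalSpace κ] [DiscreteTopology κ] [TopologicalSpace β]
    (u : κ → β) {f : Baire → κ} (hf : Continuous f) : Continuous fun z => u (f z) :=
  cont_read (fun c _ => u c) (fun _ => continuous_const) hf

lemma cont_op2 {κ₁ κ₂ β : Type*} [TopologicalSpace κ₁] [DiscreteTopology κ₁]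
    [TopologicalSpace κ₂] [DiscreteTopology κ₂] [TopologicalSpace β]
    (u : κ₁ → κ₂ → β) {f : Baire → κ₁} {g : Baire → κ₂}
    (hf : Continuous f) (hg : Continuous g) : Continuous fun z => u (f z) (g z) :=
  cont_read (fun c z => u c (g z)) (fun c => cont_op1 (u c) hg) hf

lemma cont_eval {k : Baire → ℕ} (hk : Continuous k) : Continuous fun (z : Baire) => z (k z) :=
  cont_read (fun n (z : Baire) => z n) (fun n => continuous_apply n) hk

lemma cont_left : Continuous Weihrauch.left := continuous_pi fun n => continuous_apply (2 * n)
lemma cont_right : Continuous Weihrauch.right := continuous_pi fun n => continuous_apply (2 * n + 1)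
lemma cont_tail : Continuous Weihrauch.tail := continuous_pi fun n => continuous_apply (n + 1)

lemma cont_pair {f g : Baire → Baire} (hf : Continuous f) (hg : Continuous g) :
    Continuous fun z => pair (f z) (g z) := by
  apply continuous_pi; intro m
  show Continuous fun z => if m % 2 = 0 then f z (m / 2) else g z (m / 2)
  by_cases h : m % 2 = 0 <;> simp only [h, if_true, if_false, reduceIte] <;>
    [exact (continuous_apply _).comp hf; exact (continuous_apply _).comp hg]

lemma cont_cons {f : Baire → ℕ} {g : Baire → Baire} (hf : Continuous f) (hg : Continuous g) :
    Continuous fun z => cons (f z) (g z) := by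
  apply continuous_pi; intro m
  match m with
  | 0 => exact hf
  | m + 1 => exact (continuous_apply m).comp hg

lemma cont_fproj {n i : Baire → ℕ} {g : Baire → Baire} (hn : Continuous n) (hi : Continuous i)
    (hg : Continuous g) : Continuous fun z => fproj (n z) (i z) (g z) := by
  apply continuous_pi; intro j
  show Continuous fun z => g z (j * n z + i z)
  exact cont_read (fun c z => g z c) (fun c => (continuous_apply c).comp hg)
    (cont_op2 (fun x y => j * x + y) hn hi)

lemma cont_ftup {a : Baire → ℕ} {f : Baire → ℕ → Baire} (ha : Continuous a)
    (hf : ∀ k, Continuous fun z => f z k) :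
    Continuous fun z => ftup (a z) (f z) := by
  apply continuous_pi; intro m
  show Continuous fun z => f z (m % a z) (m / a z)
  exact cont_read (fun c z => f z c (m / a z))
    (fun c => cont_read (fun d z => f z c d) (fun d => (continuous_apply d).comp (hf c))
      (cont_op1 (fun x => m / x) ha))
    (cont_op1 (fun x => m % x) ha)

lemma lc {β : Type*} [TopologicalSpace β] [DiscreteTopology β] {f : Baire → β}
    (h : ∀ z, ∃ N, ∀ z', (∀ i < N, z' i = z i) → f z' = f z) : Continuous f := by
  rw [continuous_iff_continuousAt]
  intro z
  obtain ⟨N, hN⟩ := h z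
  have hev : ∀ᶠ w in nhds z, ∀ i < N, w i = z i := by
    clear hN
    induction N with
    | zero => simp
    | succ n ih =>
      have h1 : ∀ᶠ w in nhds z, w n = z n :=
        (continuous_apply n).continuousAt ((isOpen_discrete {z n}).mem_nhds rfl)
      filter_upwards [ih, h1] with w hw hn i hi
      rcases Nat.lt_succ_iff_lt_or_eq.mp hi with h | rfl
      · exact hw i h
      · exact hn
  exact continuousAt_const.congr (hev.mono fun w hw => (hN w hw).symm)

end Toolkit
section Basics
open Weihrauch

lemma left_pair (p q : Baire) : Weihrauch.left (pair p q) = p := by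
  funext n
  show (if (2 * n) % 2 = 0 then p ((2 * n) / 2) else q ((2 * n) / 2)) = p n
  have h1 : (2 * n) % 2 = 0 := by omega
  have h2 : (2 * n) / 2 = n := by omega
  simp [h1, h2]

lemma right_pair (p q : Baire) : Weihrauch.right (pair p q) = q := by
  funext n
  show (if (2 * n + 1) % 2 = 0 then p ((2 * n + 1) / 2) else q ((2 * n + 1) / 2)) = q n
  have h1 : ¬((2 * n + 1) % 2 = 0) := by omega
  have h2 : (2 * n + 1) / 2 = n := by omega
  simp [h1, h2]

lemma tail_cons (n : ℕ) (p : Baire) : Weihrauch.tail (cons n p) = p := rfl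

lemma cons_zero' (n : ℕ) (p : Baire) : cons n p 0 = n := rfl

lemma fproj_ftup {n i : ℕ} (f : ℕ → Baire) (h : i < n) : fproj n i (ftup n f) = f i := by
  funext j
  show f ((j * n + i) % n) ((j * n + i) / n) = f i j
  have h1 : (j * n + i) % n = i := by
    rw [Nat.add_mod, Nat.mul_mod_left]
    simp [Nat.mod_eq_of_lt h]
  have h2 : (j * n + i) / n = j := by
    rw [Nat.add_comm, Nat.add_mul_div_right _ _ (by omega : 0 < n), Nat.div_eq_of_lt h]
    omega
  rw [h1, h2]

lemma fproj_tail_zero (n i : ℕ) (z : Baire) : fproj n i (Weihrauch.tail z) 0 = z (i + 1) := by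
  show z (0 * n + i + 1) = z (i + 1)
  rw [Nat.zero_mul, Nat.zero_add]

/-- Membership characterization for `dom (fpar R)`. -/
lemma mem_dom_fpar {R : MV} {z : Baire} :
    z ∈ dom (fpar R) ↔
      (z 0 = 0 ∨ (1 ≤ z 0 ∧ ∀ i < z 0, fproj (z 0) i (Weihrauch.tail z) ∈ dom R)) := by
  constructor
  · rintro ⟨r, hr | hr⟩
    · exact Or.inl hr.1
    · exact Or.inr ⟨hr.1, fun i hi => ⟨_, hr.2.2 i hi⟩⟩
  · rintro (h | ⟨h1, h2⟩)
    · exact ⟨zero, Or.inl ⟨h, rfl⟩⟩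
    · classical
      refine ⟨cons (z 0) (ftup (z 0) fun i =>
        if hi : i < z 0 then (h2 i hi).choose else zero), Or.inr ⟨h1, rfl, fun i hi => ?_⟩⟩
      rw [tail_cons, fproj_ftup _ hi, dif_pos hi]
      exact (h2 i hi).choose_spec

/-- Membership characterization for `dom (coprod P Q)`. -/
lemma mem_dom_coprod {P Q : MV} {w : Baire} :
    w ∈ dom (coprod P Q) ↔
      (w 0 = 0 ∧ Weihrauch.tail w ∈ dom P) ∨ (w 0 = 1 ∧ Weihrauch.tail w ∈ dom Q) := by
  constructor
  · rintro ⟨r, ⟨h0, s, hs, rfl⟩ | ⟨h1, s, hs, rfl⟩⟩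
    · exact Or.inl ⟨h0, s, hs⟩
    · exact Or.inr ⟨h1, s, hs⟩
  · rintro (⟨h0, s, hs⟩ | ⟨h1, s, hs⟩)
    · exact ⟨cons 0 s, Or.inl ⟨h0, s, hs, rfl⟩⟩
    · exact ⟨cons 1 s, Or.inr ⟨h1, s, hs, rfl⟩⟩

end Basics
section Defs
open Weihrauch

/-- Indices `i < z 0` whose component is tagged for `P` (tag 0). -/
def psel (z : Baire) : List ℕ := (List.range (z 0)).filter (fun i => z (i + 1) == 0)

/-- Indices `i < z 0` whose component is tagged for `Q` (tag ≠ 0). -/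
def qsel (z : Baire) : List ℕ := (List.range (z 0)).filter (fun i => z (i + 1) != 0)

lemma mem_psel {z : Baire} {i : ℕ} : i ∈ psel z ↔ i < z 0 ∧ z (i + 1) = 0 := by
  simp [psel, List.mem_filter, List.mem_range]

lemma mem_qsel {z : Baire} {i : ℕ} : i ∈ qsel z ↔ i < z 0 ∧ z (i + 1) ≠ 0 := by
  simp [qsel, List.mem_filter, List.mem_range]

lemma cont_psel : Continuous psel := by
  apply lc
  intro z
  refine ⟨z 0 + 1, fun z' hz' => ?_⟩
  have h0 : z' 0 = z 0 := hz' 0 (by omega)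
  unfold psel
  rw [h0]
  apply List.filter_congr
  intro i hi
  rw [hz' (i + 1) (by have := List.mem_range.mp hi; omega)]

lemma cont_qsel : Continuous qsel := by
  apply lc
  intro z
  refine ⟨z 0 + 1, fun z' hz' => ?_⟩
  have h0 : z' 0 = z 0 := hz' 0 (by omega)
  unfold qsel
  rw [h0]
  apply List.filter_congr
  intro i hi
  rw [hz' (i + 1) (by have := List.mem_range.mp hi; omega)]

/-- First inner reduction map: gather the `P`-tagged components. -/
def K1u (z : Baire) : Baire :=
  cons (psel z).length (ftup (psel z).length fun k =>
    Weihrauch.tail (fproj (z 0) ((psel z).getD k 0) (Weihrauch.tail z)))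

/-- First inner reduction map: gather the `Q`-tagged components. -/
def K1v (z : Baire) : Baire :=
  cons (qsel z).length (ftup (qsel z).length fun k =>
    Weihrauch.tail (fproj (z 0) ((qsel z).getD k 0) (Weihrauch.tail z)))

/-- Forward reduction inner map. -/
def K1 (z : Baire) : Baire := pair (K1u z) (K1v z)

/-- Forward reduction outer map. -/
def H1 (w : Baire) : Baire :=
  if Weihrauch.left w 0 = 0 then zero else
  cons (Weihrauch.left w 0) (ftup (Weihrauch.left w 0) fun i =>
    if Weihrauch.left w (i + 1) = 0 then
      cons 0 (fproj (psel (Weihrauch.left w)).length ((psel (Weihrauch.left w)).idxOf i)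
        (Weihrauch.tail (Weihrauch.left (Weihrauch.right w))))
    else
      cons 1 (fproj (qsel (Weihrauch.left w)).length ((qsel (Weihrauch.left w)).idxOf i)
        (Weihrauch.tail (Weihrauch.right (Weihrauch.right w)))))

/-- Backward reduction inner map. -/
def K2 (z : Baire) : Baire :=
  cons (Weihrauch.left z 0 + Weihrauch.right z 0)
    (ftup (Weihrauch.left z 0 + Weihrauch.right z 0) fun i =>
      if i < Weihrauch.left z 0 then
        cons 0 (fproj (Weihrauch.left z 0) i (Weihrauch.tail (Weihrauch.left z)))
      else
        cons 1 (fproj (Weihrauch.right z 0) (i - Weihrauch.left z 0)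
          (Weihrauch.tail (Weihrauch.right z))))

/-- Backward reduction outer map. -/
def H2 (w : Baire) : Baire :=
  pair
    (if Weihrauch.left (Weihrauch.left w) 0 = 0 then zero else
      cons (Weihrauch.left (Weihrauch.left w) 0)
        (ftup (Weihrauch.left (Weihrauch.left w) 0) fun k =>
          Weihrauch.tail (fproj
            (Weihrauch.left (Weihrauch.left w) 0 + Weihrauch.right (Weihrauch.left w) 0) k
            (Weihrauch.tail (Weihrauch.right w)))))
    (if Weihrauch.right (Weihrauch.left w) 0 = 0 then zero else
      cons (Weihrauch.right (Weihrauch.left w) 0)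
        (ftup (Weihrauch.right (Weihrauch.left w) 0) fun k =>
          Weihrauch.tail (fproj
            (Weihrauch.left (Weihrauch.left w) 0 + Weihrauch.right (Weihrauch.left w) 0)
            (Weihrauch.left (Weihrauch.left w) 0 + k)
            (Weihrauch.tail (Weihrauch.right w)))))

end Defs
section Cont
open Weihrauch

lemma cont_K1u : Continuous K1u := by
  unfold K1u
  exact cont_cons (cont_op1 List.length cont_psel)
    (cont_ftup (cont_op1 List.length cont_psel) fun k =>
      cont_tail.comp (cont_fproj (continuous_apply 0)
        (cont_op1 (fun l : List ℕ => l.getD k 0) cont_psel) cont_tail))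

lemma cont_K1v : Continuous K1v := by
  unfold K1v
  exact cont_cons (cont_op1 List.length cont_qsel)
    (cont_ftup (cont_op1 List.length cont_qsel) fun k =>
      cont_tail.comp (cont_fproj (continuous_apply 0)
        (cont_op1 (fun l : List ℕ => l.getD k 0) cont_qsel) cont_tail))

lemma cont_K1 : Continuous K1 := cont_pair cont_K1u cont_K1v

lemma cont_H1 : Continuous H1 := by
  unfold H1
  refine cont_read
    (fun c w => if c = 0 then zero else
      cons c (ftup c fun i =>
        if Weihrauch.left w (i + 1) = 0 then
          cons 0 (fproj (psel (Weihrauch.left w)).length ((psel (Weihrauch.left w)).idxOf i)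
            (Weihrauch.tail (Weihrauch.left (Weihrauch.right w))))
        else
          cons 1 (fproj (qsel (Weihrauch.left w)).length ((qsel (Weihrauch.left w)).idxOf i)
            (Weihrauch.tail (Weihrauch.right (Weihrauch.right w))))))
    (fun c => ?_) ((continuous_apply 0).comp cont_left)
  by_cases hc : c = 0
  · simp only [hc, if_pos rfl]
    exact continuous_const
  · simp only [if_neg hc]
    refine cont_cons continuous_const (cont_ftup continuous_const fun i => ?_)
    refine cont_read
      (fun d w => if d = 0 then
          cons 0 (fproj (psel (Weihrauch.left w)).length ((psel (Weihrauch.left w)).idxOf i)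
            (Weihrauch.tail (Weihrauch.left (Weihrauch.right w))))
        else
          cons 1 (fproj (qsel (Weihrauch.left w)).length ((qsel (Weihrauch.left w)).idxOf i)
            (Weihrauch.tail (Weihrauch.right (Weihrauch.right w)))))
      (fun d => ?_) ((continuous_apply (i + 1)).comp cont_left)
    by_cases hd : d = 0
    · simp only [hd, if_pos rfl]
      exact cont_cons continuous_const (cont_fproj
        (cont_op1 List.length (cont_psel.comp cont_left))
        (cont_op1 (fun l : List ℕ => l.idxOf i) (cont_psel.comp cont_left))
        (cont_tail.comp (cont_left.comp cont_right)))
    · simp only [if_neg hd]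
      exact cont_cons continuous_const (cont_fproj
        (cont_op1 List.length (cont_qsel.comp cont_left))
        (cont_op1 (fun l : List ℕ => l.idxOf i) (cont_qsel.comp cont_left))
        (cont_tail.comp (cont_right.comp cont_right)))

lemma cont_K2 : Continuous K2 := by
  unfold K2
  have hA : Continuous fun z : Baire => Weihrauch.left z 0 := (continuous_apply 0).comp cont_left
  have hB : Continuous fun z : Baire => Weihrauch.right z 0 := (continuous_apply 0).comp cont_right
  have hN : Continuous fun z : Baire => Weihrauch.left z 0 + Weihrauch.right z 0 :=
    cont_op2 (· + ·) hA hB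
  refine cont_cons hN (cont_ftup hN fun i => ?_)
  refine cont_read
    (fun c z => if i < c then cons 0 (fproj c i (Weihrauch.tail (Weihrauch.left z)))
      else cons 1 (fproj (Weihrauch.right z 0) (i - c) (Weihrauch.tail (Weihrauch.right z))))
    (fun c => ?_) hA
  by_cases hc : i < c
  · simp only [if_pos hc]
    exact cont_cons continuous_const (cont_fproj continuous_const continuous_const
      (cont_tail.comp cont_left))
  · simp only [if_neg hc]
    exact cont_cons continuous_const (cont_fproj ((continuous_apply 0).comp cont_right)
      continuous_const (cont_tail.comp cont_right))

lemma cont_H2 : Continuous H2 := by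
  unfold H2
  have hA : Continuous fun w : Baire => Weihrauch.left (Weihrauch.left w) 0 :=
    (continuous_apply 0).comp (cont_left.comp cont_left)
  have hB : Continuous fun w : Baire => Weihrauch.right (Weihrauch.left w) 0 :=
    (continuous_apply 0).comp (cont_right.comp cont_left)
  refine cont_pair ?_ ?_
  · refine cont_read
      (fun c w => if c = 0 then zero else
        cons c (ftup c fun k =>
          Weihrauch.tail (fproj (c + Weihrauch.right (Weihrauch.left w) 0) k
            (Weihrauch.tail (Weihrauch.right w)))))
      (fun c => ?_) hA
    by_cases hc : c = 0
    · simp only [hc, if_pos rfl]; exact continuous_const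
    · simp only [if_neg hc]
      exact cont_cons continuous_const (cont_ftup continuous_const fun k =>
        cont_tail.comp (cont_fproj (cont_op1 (c + ·) hB) continuous_const
          (cont_tail.comp cont_right)))
  · refine cont_read
      (fun c w => if c = 0 then zero else
        cons c (ftup c fun k =>
          Weihrauch.tail (fproj (Weihrauch.left (Weihrauch.left w) 0 + c)
            (Weihrauch.left (Weihrauch.left w) 0 + k)
            (Weihrauch.tail (Weihrauch.right w)))))
      (fun c => ?_) hB
    by_cases hc : c = 0
    · simp only [hc, if_pos rfl]; exact continuous_const
    · simp only [if_neg hc]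
      exact cont_cons continuous_const (cont_ftup continuous_const fun k =>
        cont_tail.comp (cont_fproj (cont_op1 (· + c) hA) (cont_op1 (· + k) hA)
          (cont_tail.comp cont_right)))

end Cont
section Dir1
open Weihrauch

lemma getD_indexOf {l : List ℕ} {i : ℕ} (h : i ∈ l) : l.getD (l.idxOf i) 0 = i := by
  have h1 := List.idxOf_lt_length_iff.mpr h
  rw [List.getD_eq_getElem _ _ h1]
  exact List.getElem_idxOf h1

lemma getD_mem {l : List ℕ} {k : ℕ} (h : k < l.length) : l.getD k 0 ∈ l := by
  rw [List.getD_eq_getElem _ _ h]; exact List.getElem_mem h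

lemma K1u_mem_dom {P Q : MV} {z : Baire} (hz : z ∈ dom (fpar (coprod P Q))) :
    K1u z ∈ dom (fpar P) := by
  rw [mem_dom_fpar]
  simp only [K1u, cons_zero', tail_cons]
  rcases Nat.eq_zero_or_pos (psel z).length with h0 | hpos
  · exact Or.inl h0
  · refine Or.inr ⟨hpos, fun k hk => ?_⟩
    rw [fproj_ftup _ hk]
    have hmem : (psel z).getD k 0 ∈ psel z := getD_mem hk
    obtain ⟨hilt, htag⟩ := mem_psel.mp hmem
    rcases mem_dom_fpar.mp hz with h | ⟨h1, h2⟩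
    · omega
    · have := h2 _ hilt
      rcases mem_dom_coprod.mp this with ⟨_, hP⟩ | ⟨he, _⟩
      · exact hP
      · rw [fproj_tail_zero] at he; omega

lemma K1v_mem_dom {P Q : MV} {z : Baire} (hz : z ∈ dom (fpar (coprod P Q))) :
    K1v z ∈ dom (fpar Q) := by
  rw [mem_dom_fpar]
  simp only [K1v, cons_zero', tail_cons]
  rcases Nat.eq_zero_or_pos (qsel z).length with h0 | hpos
  · exact Or.inl h0
  · refine Or.inr ⟨hpos, fun k hk => ?_⟩
    rw [fproj_ftup _ hk]
    have hmem : (qsel z).getD k 0 ∈ qsel z := getD_mem hk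
    obtain ⟨hilt, htag⟩ := mem_qsel.mp hmem
    rcases mem_dom_fpar.mp hz with h | ⟨h1, h2⟩
    · omega
    · have := h2 _ hilt
      rcases mem_dom_coprod.mp this with ⟨he, _⟩ | ⟨_, hQ⟩
      · rw [fproj_tail_zero] at he; exact absurd he htag
      · exact hQ

lemma dir1 (P Q : MV) : CWle (fpar (coprod P Q)) (prod (fpar P) (fpar Q)) := by
  refine ⟨H1, K1, cont_K1.continuousOn, fun z hz => ?_, cont_H1.continuousOn,
    fun z hz y hy => ?_⟩
  · -- domain condition
    obtain ⟨s, hs⟩ := K1u_mem_dom (Q := Q) hz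
    obtain ⟨t, ht⟩ := K1v_mem_dom (P := P) hz
    refine ⟨pair s t, s, ?_, t, ?_, rfl⟩
    · rw [show Weihrauch.left (K1 z) = K1u z from left_pair _ _]; exact hs
    · rw [show Weihrauch.right (K1 z) = K1v z from right_pair _ _]; exact ht
  · -- correctness
    obtain ⟨s, hs, t, ht, rfl⟩ := hy
    rw [show Weihrauch.left (K1 z) = K1u z from left_pair _ _] at hs
    rw [show Weihrauch.right (K1 z) = K1v z from right_pair _ _] at ht
    have hH : H1 (pair z (pair s t)) =
        if z 0 = 0 then zero else
        cons (z 0) (ftup (z 0) fun i =>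
          if z (i + 1) = 0 then
            cons 0 (fproj (psel z).length ((psel z).idxOf i) (Weihrauch.tail s))
          else
            cons 1 (fproj (qsel z).length ((qsel z).idxOf i) (Weihrauch.tail t))) := by
      unfold H1
      rw [left_pair, right_pair, left_pair, right_pair]
    rw [hH]
    by_cases hz0 : z 0 = 0
    · rw [if_pos hz0]
      exact Or.inl ⟨hz0, rfl⟩
    · rw [if_neg hz0]
      refine Or.inr ⟨by omega, rfl, fun i hi => ?_⟩
      rw [tail_cons, fproj_ftup _ hi]
      by_cases htag : z (i + 1) = 0
      · -- P-tagged component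
        rw [if_pos htag]
        have hipsel : i ∈ psel z := mem_psel.mpr ⟨hi, htag⟩
        have hidx : (psel z).idxOf i < (psel z).length := List.idxOf_lt_length_iff.mpr hipsel
        simp only [fpar, Set.mem_setOf_eq, K1u, cons_zero', tail_cons] at hs
        rcases hs with ⟨h0, _⟩ | ⟨_, _, hcomp⟩
        · omega
        · have hP := hcomp _ hidx
          rw [fproj_ftup _ hidx, getD_indexOf hipsel] at hP
          exact Or.inl ⟨by rw [fproj_tail_zero]; exact htag, _, hP, rfl⟩
      · -- Q-tagged component
        rw [if_neg htag]
        have hiqsel : i ∈ qsel z := mem_qsel.mpr ⟨hi, htag⟩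
        have hidx : (qsel z).idxOf i < (qsel z).length := List.idxOf_lt_length_iff.mpr hiqsel
        simp only [fpar, Set.mem_setOf_eq, K1v, cons_zero', tail_cons] at ht
        rcases ht with ⟨h0, _⟩ | ⟨_, _, hcomp⟩
        · omega
        · have hQ := hcomp _ hidx
          rw [fproj_ftup _ hidx, getD_indexOf hiqsel] at hQ
          -- need the tag of the component to be 1
          have hw1 : fproj (z 0) i (Weihrauch.tail z) 0 = 1 := by
            rcases mem_dom_fpar.mp hz with h | ⟨_, h2⟩
            · omega
            · rcases mem_dom_coprod.mp (h2 i hi) with ⟨he, _⟩ | ⟨he, _⟩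
              · rw [fproj_tail_zero] at he; exact absurd he htag
              · exact he
          exact Or.inr ⟨hw1, _, hQ, rfl⟩

end Dir1
section Dir2
open Weihrauch

lemma dir2 (P Q : MV) : CWle (prod (fpar P) (fpar Q)) (fpar (coprod P Q)) := by
  refine ⟨H2, K2, cont_K2.continuousOn, fun z hz => ?_, cont_H2.continuousOn,
    fun z hz r hr => ?_⟩
  · -- domain condition
    obtain ⟨r0, s, hs, t, ht, _⟩ := hz
    rw [mem_dom_fpar]
    simp only [K2, cons_zero', tail_cons]
    rcases Nat.eq_zero_or_pos (Weihrauch.left z 0 + Weihrauch.right z 0) with h0 | hpos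
    · exact Or.inl h0
    · refine Or.inr ⟨hpos, fun i hi => ?_⟩
      rw [fproj_ftup _ hi]
      by_cases hia : i < Weihrauch.left z 0
      · rw [if_pos hia]
        refine mem_dom_coprod.mpr (Or.inl ⟨rfl, ?_⟩)
        rw [tail_cons]
        simp only [fpar, Set.mem_setOf_eq] at hs
        rcases hs with ⟨h0, _⟩ | ⟨_, _, hcomp⟩
        · omega
        · exact ⟨_, hcomp i hia⟩
      · rw [if_neg hia]
        refine mem_dom_coprod.mpr (Or.inr ⟨rfl, ?_⟩)
        rw [tail_cons]
        simp only [fpar, Set.mem_setOf_eq] at ht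
        rcases ht with ⟨h0, _⟩ | ⟨_, _, hcomp⟩
        · omega
        · exact ⟨_, hcomp (i - Weihrauch.left z 0) (by omega)⟩
  · -- correctness
    have hH2 : H2 (pair z r) =
        pair
          (if Weihrauch.left z 0 = 0 then zero else
            cons (Weihrauch.left z 0) (ftup (Weihrauch.left z 0) fun k =>
              Weihrauch.tail (fproj (Weihrauch.left z 0 + Weihrauch.right z 0) k
                (Weihrauch.tail r))))
          (if Weihrauch.right z 0 = 0 then zero else
            cons (Weihrauch.right z 0) (ftup (Weihrauch.right z 0) fun k =>
              Weihrauch.tail (fproj (Weihrauch.left z 0 + Weihrauch.right z 0)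
                (Weihrauch.left z 0 + k) (Weihrauch.tail r)))) := by
      unfold H2
      rw [left_pair, right_pair]
    rw [hH2]
    simp only [fpar, Set.mem_setOf_eq, K2, cons_zero', tail_cons] at hr
    refine ⟨_, ?_, _, ?_, rfl⟩
    · -- first component is in fpar P (left z)
      by_cases ha : Weihrauch.left z 0 = 0
      · rw [if_pos ha]
        exact Or.inl ⟨ha, rfl⟩
      · rw [if_neg ha]
        refine Or.inr ⟨by omega, rfl, fun k hk => ?_⟩
        rw [tail_cons, fproj_ftup _ hk]
        rcases hr with ⟨h0, _⟩ | ⟨_, _, hcomp⟩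
        · omega
        · have hc := hcomp k (by omega)
          rw [fproj_ftup _ (by omega : k < Weihrauch.left z 0 + Weihrauch.right z 0),
            if_pos hk] at hc
          rcases hc with ⟨_, s', hs', heq⟩ | ⟨h1, _⟩
          · rw [tail_cons] at hs'
            rw [heq, tail_cons]
            exact hs'
          · rw [cons_zero'] at h1; omega
    · -- second component is in fpar Q (right z)
      by_cases hb : Weihrauch.right z 0 = 0
      · rw [if_pos hb]
        exact Or.inl ⟨hb, rfl⟩
      · rw [if_neg hb]
        refine Or.inr ⟨by omega, rfl, fun k hk => ?_⟩
        rw [tail_cons, fproj_ftup _ hk]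
        rcases hr with ⟨h0, _⟩ | ⟨_, _, hcomp⟩
        · omega
        · have hc := hcomp (Weihrauch.left z 0 + k) (by omega)
          rw [fproj_ftup _ (by omega :
              Weihrauch.left z 0 + k < Weihrauch.left z 0 + Weihrauch.right z 0),
            if_neg (by omega : ¬ Weihrauch.left z 0 + k < Weihrauch.left z 0),
            Nat.add_sub_cancel_left] at hc
          rcases hc with ⟨h1, _⟩ | ⟨_, t', ht', heq⟩
          · rw [cons_zero'] at h1; omega
          · rw [tail_cons] at ht'
            rw [heq, tail_cons]
            exact ht'

end Dir2

open Weihrauch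

/-- (P ∐ Q)* ≡ᶜ_W P* × Q*: the finite parallelization of a coproduct is the
product of the finite parallelizations, up to continuous Weihrauch equivalence. -/
theorem star_coprod (P Q : MV) :
    CWequiv (fpar (coprod P Q)) (prod (fpar P) (fpar Q)) :=
  ⟨dir1 P Q, dir2 P Q⟩
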